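/- arXiv:1301.4952 — 4 statements merged into one kernel-verified Lean document; each statement's English description precedes it below -/
import Mathlib

section
/- Let p be a sequence of m distinct integers and w = w_1...w_ℓ (ℓ < m) a sequence of distinct integers that is order-isomorphic to p_1...p_ℓ. Let x_1 be an index in [ℓ] such that p_{x_1} is the largest element of p_1...p_ℓ smaller than p_{ℓ+1} (if it exists), and x_2 an index such that p_{x_2} is the smallest element of p_1...p_ℓ larger than p_{ℓ+1} (if it exists). Then for any integer α not occurring in w, the sequence wα is order-isomorphic to p_1...p_{ℓ+1} if and only if w_{x_1} < α (when x_1 exists) and α < w_{x_2} (when x_2 exists). -/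
/-- extending an order-isomorphism by one symbol is characterized by
the predecessor/successor pair. -/
theorem stmt_0 (m ℓ : ℕ) (hl : ℓ + 1 ≤ m) (p : Fin m → ℤ)
    (hp : Function.Injective p) (w : Fin ℓ → ℤ) (hw : Function.Injective w)
    (hiso : ∀ k l : Fin ℓ,
      w k < w l ↔ p (Fin.castLE (by omega) k) < p (Fin.castLE (by omega) l))
    (α : ℤ) (hα : ∀ k : Fin ℓ, w k ≠ α) :
    (∀ k l : Fin (ℓ + 1),
        (Fin.snoc w α : Fin (ℓ + 1) → ℤ) k < (Fin.snoc w α : Fin (ℓ + 1) → ℤ) l ↔ p (Fin.castLE hl k) < p (Fin.castLE hl l))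
      ↔
    ((∀ x1 : Fin ℓ,
        p (Fin.castLE hl x1.castSucc) < p (Fin.castLE hl (Fin.last ℓ)) →
        (∀ k : Fin ℓ, p (Fin.castLE hl k.castSucc) < p (Fin.castLE hl (Fin.last ℓ)) →
          p (Fin.castLE hl k.castSucc) ≤ p (Fin.castLE hl x1.castSucc)) →
        w x1 < α) ∧
     (∀ x2 : Fin ℓ,
        p (Fin.castLE hl (Fin.last ℓ)) < p (Fin.castLE hl x2.castSucc) →
        (∀ k : Fin ℓ, p (Fin.castLE hl (Fin.last ℓ)) < p (Fin.castLE hl k.castSucc) →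
          p (Fin.castLE hl x2.castSucc) ≤ p (Fin.castLE hl k.castSucc)) →
        α < w x2)) := by
  have hle : ∀ k l : Fin ℓ, w k ≤ w l ↔
      p (Fin.castLE hl k.castSucc) ≤ p (Fin.castLE hl l.castSucc) := by
    intro k l
    rw [← not_lt, ← not_lt, not_iff_not]
    exact hiso l k
  constructor
  · intro H
    constructor
    · intro x1 h1 _
      have := (H x1.castSucc (Fin.last ℓ)).mpr h1
      simpa using this
    · intro x2 h2 _
      have := (H (Fin.last ℓ) x2.castSucc).mpr h2
      simpa using this
  · rintro ⟨H1, H2⟩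
    have key : ∀ k : Fin ℓ, w k < α ↔
        p (Fin.castLE hl k.castSucc) < p (Fin.castLE hl (Fin.last ℓ)) := by
      intro k
      constructor
      · intro hk
        by_contra hcon
        push_neg at hcon
        have hne : p (Fin.castLE hl (Fin.last ℓ)) ≠ p (Fin.castLE hl k.castSucc) := by
          intro h
          have := hp h
          have : (Fin.castLE hl (Fin.last ℓ)).val = (Fin.castLE hl k.castSucc).val :=
            congrArg Fin.val this
          simp at this
          omega
        have hlt : p (Fin.castLE hl (Fin.last ℓ)) < p (Fin.castLE hl k.castSucc) :=
          lt_of_le_of_ne hcon hne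
        -- pick minimizer x2
        obtain ⟨x2, hx2mem, hx2min⟩ := Finset.exists_min_image
          (Finset.univ.filter (fun j : Fin ℓ =>
            p (Fin.castLE hl (Fin.last ℓ)) < p (Fin.castLE hl j.castSucc)))
          (fun j => p (Fin.castLE hl j.castSucc))
          ⟨k, by simpa using hlt⟩
        simp only [Finset.mem_filter, Finset.mem_univ, true_and] at hx2mem hx2min
        have hαx2 : α < w x2 := H2 x2 hx2mem (fun j hj => hx2min j hj)
        have : w x2 ≤ w k := (hle x2 k).mpr (hx2min k hlt)
        omega
      · intro hk
        -- pick maximizer x1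
        obtain ⟨x1, hx1mem, hx1max⟩ := Finset.exists_max_image
          (Finset.univ.filter (fun j : Fin ℓ =>
            p (Fin.castLE hl j.castSucc) < p (Fin.castLE hl (Fin.last ℓ))))
          (fun j => p (Fin.castLE hl j.castSucc))
          ⟨k, by simpa using hk⟩
        simp only [Finset.mem_filter, Finset.mem_univ, true_and] at hx1mem hx1max
        have hαx1 : w x1 < α := H1 x1 hx1mem (fun j hj => hx1max j hj)
        have : w k ≤ w x1 := (hle k x1).mpr (hx1max k hk)
        omega
    intro k l
    induction k using Fin.lastCases with
    | last =>
      induction l using Fin.lastCases with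
      | last => simp
      | cast l =>
        simp only [Fin.snoc_last, Fin.snoc_castSucc]
        rw [← not_le, ← not_le, not_iff_not]
        constructor
        · intro h
          have := lt_of_le_of_ne h (hα l)
          exact le_of_lt ((key l).mp this)
        · intro h
          have := (key l).mpr (lt_of_le_of_ne h (by
            intro heq
            have := hp heq
            have : (Fin.castLE hl l.castSucc).val = (Fin.castLE hl (Fin.last ℓ)).val :=
              congrArg Fin.val this
            simp at this
            omega))
          omega
    | cast k =>
      induction l using Fin.lastCases with
      | last =>
        simp only [Fin.snoc_last, Fin.snoc_castSucc]
        exact key k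
      | cast l =>
        simp only [Fin.snoc_castSucc]
        exact hiso k l
end

section
/- In the forward automaton built on a pattern p of length m (a sequence of distinct integers), for each difference ℓ with 1 ≤ ℓ < m there is at most one backward transition δ(x,[i,j]) = q with q ≥ 2 and x − q = ℓ. Hence the number of backward transitions with target state q ≥ 2 is at most m − 2. -/
/-- The prefix of `p` of length `len` is order-isomorphic to the factor of `p`
of length `len` ending at position `a` (1-indexed length; positions `a-len+1..a`). -/
def IsoAt (m : ℕ) (p : Fin m → ℤ) (len a : ℕ) : Prop :=
  ∃ h : len ≤ a ∧ a ≤ m, ∀ i j : Fin len,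
    p ⟨i, by have := i.isLt; omega⟩ < p ⟨j, by have := j.isLt; omega⟩ ↔
    p ⟨a - len + i, by have := i.isLt; omega⟩ < p ⟨a - len + j, by have := j.isLt; omega⟩

/-- `(x, q)` is a valid backward transition of the forward automaton on `p`
with target state `q ≥ 2`: `p_1…p_{q-1}` is order-isomorphic to the suffix of
`p_1…p_x` of length `q-1`, and either `x = m` or `p_1…p_q` is not
order-isomorphic to the suffix of `p_1…p_{x+1}` of length `q`. -/
def ValidBack (m : ℕ) (p : Fin m → ℤ) (x q : ℕ) : Prop :=
  2 ≤ q ∧ q < x ∧ x ≤ m ∧ IsoAt m p (q - 1) x ∧ (x = m ∨ ¬ IsoAt m p q (x + 1))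

lemma vb_lt_false (m : ℕ) (p : Fin m → ℤ) (x q x' q' : ℕ)
    (hv : ValidBack m p x q) (hv' : ValidBack m p x' q')
    (hd : x - q = x' - q') (hlt : x < x') : False := by
  obtain ⟨hq2, hqx, hxm, _, hneg⟩ := hv
  obtain ⟨hq2', hqx', hxm', hiso', _⟩ := hv'
  have hn : ¬ IsoAt m p q (x + 1) := by
    rcases hneg with h | h
    · omega
    · exact h
  apply hn
  obtain ⟨⟨hle, ham⟩, hf⟩ := hiso'
  refine ⟨⟨by omega, by omega⟩, fun i j => ?_⟩
  have hi := i.isLt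
  have hj := j.isLt
  have hqq : q ≤ q' - 1 := by omega
  have := hf ⟨i, by omega⟩ ⟨j, by omega⟩
  convert this using 4 <;> simp <;> omega

/-- for each difference `ℓ`, `1 ≤ ℓ < m`, there is at most one
backward transition with target `q ≥ 2` and `x − q = ℓ`; hence at most `m − 2`
such backward transitions in total. -/
theorem stmt_5 (m : ℕ) (p : Fin m → ℤ) (hp : Function.Injective p) :
    (∀ ℓ : ℕ, 1 ≤ ℓ → ℓ < m →
      ∀ x q x' q' : ℕ, ValidBack m p x q → ValidBack m p x' q' →
        x - q = ℓ → x' - q' = ℓ → x = x' ∧ q = q') ∧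
    Set.ncard {xq : ℕ × ℕ | ValidBack m p xq.1 xq.2} ≤ m - 2 := by
  have key : ∀ x q x' q' : ℕ, ValidBack m p x q → ValidBack m p x' q' →
      x - q = x' - q' → x = x' ∧ q = q' := by
    intro x q x' q' hv hv' hd
    rcases lt_trichotomy x x' with h | h | h
    · exact absurd (vb_lt_false m p x q x' q' hv hv' hd h) (fun h => h)
    · have h1 := hv.1
      have h2 := hv.2.1
      have h1' := hv'.1
      have h2' := hv'.2.1
      omega
    · exact absurd (vb_lt_false m p x' q' x q hv' hv hd.symm h) (fun h => h)
  constructor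
  · intro ℓ _ _ x q x' q' hv hv' he he'
    exact key x q x' q' hv hv' (by omega)
  · set S : Set (ℕ × ℕ) := {xq : ℕ × ℕ | ValidBack m p xq.1 xq.2} with hS
    have hinj : Set.InjOn (fun xq : ℕ × ℕ => xq.1 - xq.2) S := by
      intro a ha b hb hab
      have := key a.1 a.2 b.1 b.2 ha hb hab
      exact Prod.ext this.1 this.2
    have hsub : (fun xq : ℕ × ℕ => xq.1 - xq.2) '' S ⊆ Set.Icc 1 (m - 2) := by
      rintro ℓ ⟨⟨x, q⟩, hxq, rfl⟩
      obtain ⟨hq2, hqx, hxm, -, -⟩ := hxq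
      simp only [Set.mem_Icc]
      omega
    calc S.ncard = ((fun xq : ℕ × ℕ => xq.1 - xq.2) '' S).ncard :=
          (Set.ncard_image_of_injOn hinj).symm
      _ ≤ (Set.Icc 1 (m - 2)).ncard := Set.ncard_le_ncard hsub (Set.finite_Icc _ _)
      _ ≤ m - 2 := by
          rw [← Finset.coe_Icc, Set.ncard_coe_finset, Nat.card_Icc]
          omega
end

section
/- Counting lemma: Fix m, d ≥ 1 and 0 < ℓ ≤ m, and fix a set of ℓ access positions 1 ≤ i_1 < ... < i_ℓ ≤ m in a text window of length m + d. Let P_m(ℓ) be the set of permutations p of [m] such that for every shift j ∈ {0,...,d} there exist positions k, k' ∈ B_j = {b ∈ [m] : j + b = i_t for some t} with p_k > p_{k'} while the text has t_{j+k} < t_{j+k'} (i.e., p is discarded at every shift), for a uniformly random text. Then |P_m(ℓ)| ≤ m! (1 − 1/ℓ!)^{⌈d/ℓ²⌉}. -/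
/-!
Right-multiplying a pattern `p` by a permutation of a block `B ⊆ [m]` rearranges the values of `p`
on `B` arbitrarily, and exactly the rearrangements ordered like the text survive at the shift
owning `B`. So among the `|B|!` rearrangements of any `p` at least one is not discarded there, and
any set of patterns invariant under these rearrangements loses at most a fraction `1 - 1/|B|!` to
that shift. A rearrangement on one block leaves `p` unchanged on every disjoint block, so for
`s` shifts with pairwise disjoint access sets, induction on `s` bounds the fraction discarded at
all of them by `(1 - 1/ℓ!)^s`. Shifts `j, j'` can share an accessed offset only if
`j' - j ∈ I - I`, so each shift conflicts with at most `ℓ²` shifts (itself included), and a greedy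
choice finds `s ≥ (d + 1)/ℓ²` pairwise non-conflicting ones.
-/

open Finset Equiv

/-- A pattern `p` survives a shift with access set `B` and window text `f` iff
`OrderAgreesOn B f p`. -/
def OrderAgreesOn {ι α β : Type*} [LinearOrder α] [LinearOrder β] (B : Finset ι)
    (f : ι → α) (q : ι → β) : Prop :=
  ∀ a ∈ B, ∀ b ∈ B, f a < f b → q a < q b

instance {ι α β : Type*} [LinearOrder α] [LinearOrder β] (B : Finset ι) (f : ι → α)
    (q : ι → β) : Decidable (OrderAgreesOn B f q) := by
  unfold OrderAgreesOn; infer_instance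

lemma orderAgreesOn_congr {ι α β : Type*} [LinearOrder α] [LinearOrder β] {B : Finset ι}
    {f : ι → α} {q q' : ι → β} (h : ∀ k ∈ B, q k = q' k) :
    OrderAgreesOn B f q ↔ OrderAgreesOn B f q' := by
  unfold OrderAgreesOn
  refine forall₂_congr fun a ha => forall₂_congr fun b hb => ?_
  rw [h a ha, h b hb]

lemma exists_equiv_fin_lt_iff {ι α : Type*} [Fintype ι] [LinearOrder α] {f : ι → α}
    (hf : Function.Injective f) :
    ∃ e : ι ≃ Fin (Fintype.card ι), ∀ a b, f a < f b ↔ e a < e b := by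
  classical
  let r := Fintype.orderIsoFinOfCardEq (Set.range f) (Set.card_range_of_injective hf)
  refine ⟨(Equiv.ofInjective f hf).trans r.symm.toEquiv, fun a b => ?_⟩
  exact (r.symm.lt_iff_lt (x := ⟨f a, a, rfl⟩) (y := ⟨f b, b, rfl⟩)).symm

lemma exists_perm_lt_comp {ι α β : Type*} [Fintype ι] [LinearOrder α] [LinearOrder β]
    {f : ι → α} {q : ι → β} (hf : Function.Injective f) (hq : Function.Injective q) :
    ∃ g : Perm ι, ∀ a b, f a < f b → q (g a) < q (g b) := by
  obtain ⟨ef, hef⟩ := exists_equiv_fin_lt_iff hf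
  obtain ⟨eq, heq⟩ := exists_equiv_fin_lt_iff hq
  refine ⟨ef.trans eq.symm, fun a b hab => ?_⟩
  simpa [heq] using (hef a b).1 hab

lemma exists_perm_orderAgreesOn_mul_ofSubtype {κ α : Type*} [LinearOrder κ] [LinearOrder α]
    {B : Finset κ} {f : κ → α} (hf : Set.InjOn f B) (p : Perm κ) :
    ∃ g : Perm B, OrderAgreesOn B f ⇑(p * Perm.ofSubtype g) := by
  obtain ⟨g, hg⟩ := exists_perm_lt_comp (f := fun k : B => f k) (q := fun k : B => p k)
    hf.injective (p.injective.comp Subtype.val_injective)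
  refine ⟨g, fun a ha b hb hab => ?_⟩
  simpa [Perm.ofSubtype_apply_of_mem _ ha, Perm.ofSubtype_apply_of_mem _ hb]
    using hg ⟨a, ha⟩ ⟨b, hb⟩ hab

/-- Averaging: double count the pairs `(x, g)` with `x ∈ Q` and `A (φ g x)`. -/
lemma card_le_card_mul_card_filter {X G : Type*} [Fintype G] (Q : Finset X) (A : X → Prop)
    [DecidablePred A] (φ : G → X → X) (hmaps : ∀ g, Set.MapsTo (φ g) Q Q)
    (hinj : ∀ g, Set.InjOn (φ g) Q) (hcover : ∀ x ∈ Q, ∃ g, A (φ g x)) :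
    #Q ≤ Fintype.card G * #(Q.filter A) := by
  classical
  let r : X → G → Prop := fun x g => A (φ g x)
  calc #Q = ∑ _x ∈ Q, 1 := by rw [card_eq_sum_ones]
    _ ≤ ∑ x ∈ Q, #(univ.bipartiteAbove r x) := by
        refine sum_le_sum fun x hx => ?_
        obtain ⟨g, hg⟩ := hcover x hx
        exact card_pos.2 ⟨g, mem_filter.2 ⟨mem_univ g, hg⟩⟩
    _ = ∑ g, #(Q.bipartiteBelow r g) := sum_card_bipartiteAbove_eq_sum_card_bipartiteBelow r
    _ ≤ ∑ _g : G, #(Q.filter A) := by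
        refine sum_le_sum fun g _ => card_le_card_of_injOn (φ g) (fun x hx => ?_)
          ((hinj g).mono (filter_subset _ Q))
        obtain ⟨hxQ, hxA⟩ := mem_filter.1 hx
        exact mem_filter.2 ⟨hmaps g hxQ, hxA⟩
    _ = Fintype.card G * #(Q.filter A) := by rw [sum_const, card_univ, smul_eq_mul]

lemma one_sub_one_div_factorial_nonneg (n : ℕ) : (0 : ℝ) ≤ 1 - 1 / n.factorial := by
  rw [sub_nonneg, div_le_one (by positivity)]
  exact_mod_cast n.factorial_pos

lemma card_filter_not_orderAgreesOn_le {κ α : Type*} [LinearOrder κ] [LinearOrder α]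
    {B : Finset κ} {f : κ → α} (hf : Set.InjOn f B) (Q : Finset (Perm κ))
    (hQ : ∀ p ∈ Q, ∀ g : Perm B, p * Perm.ofSubtype g ∈ Q) :
    (#(Q.filter fun p : Perm κ => ¬OrderAgreesOn B f ⇑p) : ℝ)
      ≤ #Q * (1 - 1 / (#B).factorial) := by
  have hfac : (0 : ℝ) < (#B).factorial := by exact_mod_cast (#B).factorial_pos
  have havg : #Q ≤ (#B).factorial * #(Q.filter fun p : Perm κ => OrderAgreesOn B f ⇑p) := by
    simpa [Fintype.card_perm] using
      card_le_card_mul_card_filter Q (fun p : Perm κ => OrderAgreesOn B f ⇑p)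
        (fun (g : Perm B) p => p * Perm.ofSubtype g) (fun g p hp => hQ p hp g)
        (fun g => (mul_left_injective _).injOn)
        (fun p _ => exists_perm_orderAgreesOn_mul_ofSubtype hf p)
  have havg' : (#Q : ℝ) / (#B).factorial
      ≤ #(Q.filter fun p : Perm κ => OrderAgreesOn B f ⇑p) :=
    (div_le_iff₀' hfac).2 (by exact_mod_cast havg)
  have hsplit : (#(Q.filter fun p : Perm κ => OrderAgreesOn B f ⇑p) : ℝ)
      + #(Q.filter fun p : Perm κ => ¬OrderAgreesOn B f ⇑p) = #Q := by
    exact_mod_cast card_filter_add_card_filter_not _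
  rw [mul_one_sub, mul_one_div]
  linarith

lemma ncard_forall_not_orderAgreesOn_le {ι κ α : Type*} [Finite κ] [LinearOrder κ]
    [LinearOrder α] {ℓ : ℕ} (B : ι → Finset κ) (f : ι → κ → α) (S : Finset ι)
    (hdisj : (S : Set ι).PairwiseDisjoint B) (hcard : ∀ j ∈ S, #(B j) ≤ ℓ)
    (hinj : ∀ j ∈ S, Set.InjOn (f j) (B j)) :
    ({p : Perm κ | ∀ j ∈ S, ¬OrderAgreesOn (B j) (f j) ⇑p}.ncard : ℝ)
      ≤ (Nat.card κ).factorial * (1 - 1 / ℓ.factorial) ^ #S := by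
  classical
  have := Fintype.ofFinite κ
  induction S using Finset.induction_on with
  | empty => simp [Fintype.card_perm]
  | insert a S ha ih =>
    rw [coe_insert, Set.pairwiseDisjoint_insert] at hdisj
    set Q := univ.filter fun p : Perm κ => ∀ j ∈ S, ¬OrderAgreesOn (B j) (f j) ⇑p
    have hQ : ∀ p ∈ Q, ∀ g : Perm (B a), p * Perm.ofSubtype g ∈ Q := by
      intro p hp g
      simp only [Q, mem_filter, mem_univ, true_and] at hp ⊢
      intro j hj
      refine fun hagree => hp j hj ((orderAgreesOn_congr fun k hk => ?_).1 hagree)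
      rw [Perm.mul_apply, Perm.ofSubtype_apply_of_not_mem _
        (disjoint_right.1 (hdisj.2 j hj (ne_of_mem_of_not_mem hj ha).symm) hk)]
    have hQS : {p : Perm κ | ∀ j ∈ S, ¬OrderAgreesOn (B j) (f j) ⇑p} = Q := by
      ext p
      simp [Q]
    have hinsert : {p : Perm κ | ∀ j ∈ insert a S, ¬OrderAgreesOn (B j) (f j) ⇑p}
        = Q.filter fun p : Perm κ => ¬OrderAgreesOn (B a) (f a) ⇑p := by
      ext p
      simp [Q, and_comm]
    rw [hinsert, Set.ncard_coe_finset, card_insert_of_notMem ha, pow_succ, ← mul_assoc]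
    calc _ ≤ #Q * (1 - 1 / (#(B a)).factorial : ℝ) :=
          card_filter_not_orderAgreesOn_le (hinj a (mem_insert_self a S)) Q hQ
      _ ≤ #Q * (1 - 1 / ℓ.factorial : ℝ) := by
          gcongr
          exact hcard a (mem_insert_self a S)
      _ ≤ _ := by
          gcongr
          · exact one_sub_one_div_factorial_nonneg ℓ
          rw [← Set.ncard_coe_finset, ← hQS]
          exact ih hdisj.1 (fun j hj => hcard j (mem_insert_of_mem hj))
            (fun j hj => hinj j (mem_insert_of_mem hj))

lemma exists_subset_pairwise_not_rel_card_le_mul {α : Type*} [DecidableEq α]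
    (R : α → α → Prop) [DecidableRel R] (hsymm : ∀ a b, R a b → R b a) (hrefl : ∀ a, R a a)
    {K : ℕ} (X : Finset α) (hdeg : ∀ x ∈ X, #(X.filter (R x)) ≤ K) :
    ∃ S ⊆ X, (S : Set α).Pairwise (fun a b => ¬R a b) ∧ #X ≤ #S * K := by
  induction X using Finset.strongInduction with
  | H X ih =>
  obtain rfl | ⟨x, hx⟩ := X.eq_empty_or_nonempty
  · exact ⟨∅, empty_subset _, by simp, by simp⟩
  set X' := X.filter fun y => ¬R x y
  have hxX' : x ∉ X' := by simp [X', hrefl x]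
  have hX'X : X' ⊆ X := filter_subset _ X
  obtain ⟨S', hS'X', hS', hcard⟩ :=
    ih X' (ssubset_of_subset_of_ne hX'X fun h => hxX' (h ▸ hx)) fun y hy =>
      (card_le_card (filter_subset_filter _ hX'X)).trans (hdeg y (hX'X hy))
  refine ⟨insert x S', insert_subset hx (hS'X'.trans hX'X), ?_, ?_⟩
  · rw [coe_insert, Set.pairwise_insert]
    refine ⟨hS', fun y hy _ => ⟨(mem_filter.1 (hS'X' hy)).2, fun h => ?_⟩⟩
    exact (mem_filter.1 (hS'X' hy)).2 (hsymm _ _ h)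
  · have hsplit := card_filter_add_card_filter_not (s := X) (R x)
    rw [card_insert_of_notMem fun h => hxX' (hS'X' h)]
    linarith [hdeg x hx]

/-- The access set `B_j` of shift `j`. -/
def accessedOffsets (I : Finset ℕ) (m j : ℕ) : Finset (Fin m) :=
  univ.filter fun k => j + (k : ℕ) ∈ I

def ShiftsOverlap (I : Finset ℕ) (j j' : ℕ) : Prop :=
  ∃ a ∈ I, ∃ b ∈ I, j' + a = j + b

instance (I : Finset ℕ) : DecidableRel (ShiftsOverlap I) := fun _ _ => by
  unfold ShiftsOverlap; infer_instance

lemma ShiftsOverlap.symm {I : Finset ℕ} {j j' : ℕ} :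
    ShiftsOverlap I j j' → ShiftsOverlap I j' j :=
  fun ⟨a, ha, b, hb, h⟩ => ⟨b, hb, a, ha, h.symm⟩

lemma shiftsOverlap_refl {I : Finset ℕ} (hI : I.Nonempty) (j : ℕ) : ShiftsOverlap I j j :=
  ⟨hI.choose, hI.choose_spec, hI.choose, hI.choose_spec, rfl⟩

lemma card_filter_shiftsOverlap_le (I : Finset ℕ) {d : ℕ} (j : Fin d) :
    #(univ.filter fun j' : Fin d => ShiftsOverlap I j j') ≤ #I ^ 2 := by
  classical
  calc _ ≤ #((I ×ˢ I).image fun ab : ℕ × ℕ => (j : ℕ) + ab.2 - ab.1) := by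
        refine card_le_card_of_injOn Fin.val (fun j' hj' => ?_) Fin.val_injective.injOn
        obtain ⟨a, ha, b, hb, h⟩ := (mem_filter.1 hj').2
        exact mem_image.2 ⟨(a, b), mem_product.2 ⟨ha, hb⟩, by omega⟩
    _ ≤ #(I ×ˢ I) := card_image_le
    _ = #I ^ 2 := by rw [card_product, sq]

lemma disjoint_accessedOffsets {I : Finset ℕ} {m j j' : ℕ} (h : ¬ShiftsOverlap I j j') :
    Disjoint (accessedOffsets I m j) (accessedOffsets I m j') := by
  refine disjoint_left.2 fun k hk hk' => h ⟨j + k, (mem_filter.1 hk).2, j' + k, ?_, ?_⟩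
  · exact (mem_filter.1 hk').2
  · omega

lemma card_accessedOffsets_le (I : Finset ℕ) (m j : ℕ) : #(accessedOffsets I m j) ≤ #I :=
  card_le_card_of_injOn (fun k => j + (k : ℕ)) (fun _ hk => (mem_filter.1 hk).2)
    fun _ _ _ _ h => Fin.ext (by simpa using h)

theorem stmt_7_general (m d ℓ : ℕ) (hl0 : 0 < ℓ)
    (I : Finset ℕ) (hIcard : I.card = ℓ)
    (t : Fin (m + d) → ℤ) (ht : Function.Injective t) :
    (Set.ncard {p : Equiv.Perm (Fin m) |
        ∀ j ≤ d, ∃ k < m, ∃ k' < m, (j + k) ∈ I ∧ (j + k') ∈ I ∧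
          ∃ (hk : k < m) (hk' : k' < m) (h1 : j + k < m + d) (h2 : j + k' < m + d),
            p ⟨k', hk'⟩ < p ⟨k, hk⟩ ∧ t ⟨j + k, h1⟩ < t ⟨j + k', h2⟩} : ℝ)
      ≤ (Nat.factorial m : ℝ) *
          (1 - 1 / (Nat.factorial ℓ : ℝ)) ^ (Nat.ceil ((d : ℝ) / (ℓ : ℝ) ^ 2)) := by
  let B : Fin (d + 1) → Finset (Fin m) := fun j => accessedOffsets I m j
  let f : Fin (d + 1) → Fin m → ℤ := fun j k => t ⟨j + k, by omega⟩
  obtain ⟨S, -, hS, hcardS⟩ := exists_subset_pairwise_not_rel_card_le_mul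
    (fun j j' : Fin (d + 1) => ShiftsOverlap I j j') (fun _ _ => ShiftsOverlap.symm)
    (fun j => shiftsOverlap_refl (card_pos.1 (hIcard ▸ hl0)) j) univ
    fun j _ => hIcard ▸ card_filter_shiftsOverlap_le I j
  have hexp : ⌈(d : ℝ) / ℓ ^ 2⌉₊ ≤ #S := by
    rw [Nat.ceil_le, div_le_iff₀ (by positivity)]
    rw [card_univ, Fintype.card_fin] at hcardS
    exact_mod_cast hcardS.trans' d.le_succ
  calc _ ≤ ({p : Perm (Fin m) | ∀ j ∈ S, ¬OrderAgreesOn (B j) (f j) ⇑p}.ncard : ℝ) := by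
        refine Nat.cast_le.2 (Set.ncard_le_ncard (fun p hp j _ hagree => ?_) (Set.toFinite _))
        obtain ⟨k, hk, k', hk', hkI, hk'I, _, _, _, _, hpk, htk⟩ := hp j (Nat.lt_succ_iff.1 j.2)
        exact (hagree ⟨k, hk⟩ (mem_filter.2 ⟨mem_univ _, hkI⟩) ⟨k', hk'⟩
          (mem_filter.2 ⟨mem_univ _, hk'I⟩) htk).not_gt hpk
    _ ≤ m.factorial * (1 - 1 / ℓ.factorial) ^ #S := by
        simpa using ncard_forall_not_orderAgreesOn_le B f S
          (fun j _ j' _ hne => disjoint_accessedOffsets (hS (mem_coe.1 ‹_›) ‹_› hne))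
          (fun j _ => hIcard ▸ card_accessedOffsets_le I m j)
          fun j _ k _ k' _ h => Fin.ext (by simpa [f] using ht h)
    _ ≤ _ := mul_le_mul_of_nonneg_left
        (pow_le_pow_of_le_one (one_sub_one_div_factorial_nonneg ℓ) (by simp) hexp) (by positivity)

/-- Counting lemma: with `ℓ` access positions `I` in a text window
of length `m + d` (positions `0,…,m+d-1`), the number of pattern permutations of
`[m]` discarded at every shift `j ∈ {0,…,d}` (i.e. exhibiting a mismatch with
the fixed text `t` on the accessed positions of the window at shift `j`) is at
most `m! (1 − 1/ℓ!)^⌈d/ℓ²⌉`. -/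
theorem stmt_7 (m d ℓ : ℕ) (hm : 1 ≤ m) (hd : 1 ≤ d) (hl0 : 0 < ℓ) (hlm : ℓ ≤ m)
    (I : Finset ℕ) (hI : I ⊆ Finset.range (m + d)) (hIcard : I.card = ℓ)
    (t : Fin (m + d) → ℤ) (ht : Function.Injective t) :
    (Set.ncard {p : Equiv.Perm (Fin m) |
        ∀ j ≤ d, ∃ k < m, ∃ k' < m, (j + k) ∈ I ∧ (j + k') ∈ I ∧
          ∃ (hk : k < m) (hk' : k' < m) (h1 : j + k < m + d) (h2 : j + k' < m + d),
            p ⟨k', hk'⟩ < p ⟨k, hk⟩ ∧ t ⟨j + k, h1⟩ < t ⟨j + k', h2⟩} : ℝ)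
      ≤ (Nat.factorial m : ℝ) *
          (1 - 1 / (Nat.factorial ℓ : ℝ)) ^ (Nat.ceil ((d : ℝ) / (ℓ : ℝ) ^ 2)) :=
  stmt_7_general m d ℓ hl0 I hIcard t ht
end

section
/- Greedy disjointness lemma: Let d ≥ 1 and ℓ ≥ 1, and for each j ∈ {0,...,d} let B_j ⊆ [m] be a set with |B_j| ≤ ℓ, where B_j = {b ∈ [m] : j + b ∈ I} for a fixed set I of ℓ positions. Then there exists J ⊆ {0,...,d} with |J| ≥ ⌈d/ℓ²⌉ such that the sets B_j for j ∈ J are pairwise disjoint. -/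
/-- Greedy lemma: from any finite set `S` of naturals we can extract a subset `J`
with `S.card ≤ J.card * (F.card + 1)` such that no difference of two elements of
`J` lies in `F`. -/
lemma greedy_avoid (F : Finset ℕ) (S : Finset ℕ) :
    ∃ J : Finset ℕ, J ⊆ S ∧ S.card ≤ J.card * (F.card + 1) ∧
      ∀ a ∈ J, ∀ b ∈ J, a < b → b - a ∉ F := by
  induction S using Finset.strongInductionOn with
  | _ S ih =>
    rcases S.eq_empty_or_nonempty with rfl | hS
    · exact ⟨∅, by simp⟩
    · set a := S.min' hS with ha
      set T : Finset ℕ := insert a (F.image (a + ·)) with hT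
      set S' := S \ T with hS'
      have haS : a ∈ S := S.min'_mem hS
      have hss : S' ⊂ S := by
        refine Finset.ssubset_iff_of_subset (Finset.sdiff_subset) |>.2 ⟨a, haS, ?_⟩
        simp [hS', hT]
      obtain ⟨J', hJ'S, hcard, hgood⟩ := ih S' hss
      have haJ' : ∀ b ∈ J', a < b := by
        intro b hb
        have hbS' := hJ'S hb
        have hbS : b ∈ S := (Finset.sdiff_subset) hbS'
        have : b ≠ a := by
          intro h; subst h
          exact (Finset.mem_sdiff.1 hbS').2 (Finset.mem_insert_self _ _)
        exact lt_of_le_of_ne (S.min'_le b hbS) (Ne.symm this)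
      have haJ'mem : a ∉ J' := fun h => lt_irrefl a (haJ' a h)
      refine ⟨insert a J', ?_, ?_, ?_⟩
      · intro x hx
        rcases Finset.mem_insert.1 hx with rfl | hx
        · exact haS
        · exact (Finset.sdiff_subset) (hJ'S hx)
      · have h1 : S.card ≤ S'.card + T.card := by
          calc S.card ≤ (S ∪ T).card := Finset.card_le_card Finset.subset_union_left
            _ = S'.card + T.card := by
                rw [hS', Finset.card_sdiff_add_card]
        have h2 : T.card ≤ F.card + 1 := by
          calc T.card ≤ (F.image (a + ·)).card + 1 := Finset.card_insert_le _ _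
            _ ≤ F.card + 1 := by exact Nat.add_le_add_right (Finset.card_image_le) 1
        have h3 : (insert a J').card = J'.card + 1 :=
          Finset.card_insert_of_notMem haJ'mem
        calc S.card ≤ S'.card + T.card := h1
          _ ≤ J'.card * (F.card + 1) + (F.card + 1) := Nat.add_le_add hcard h2
          _ = (J'.card + 1) * (F.card + 1) := by ring
          _ = (insert a J').card * (F.card + 1) := by rw [h3]
      · intro x hx y hy hxy
        rcases Finset.mem_insert.1 hx with rfl | hx
        · rcases Finset.mem_insert.1 hy with rfl | hy
          · exact absurd hxy (lt_irrefl _)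
          · -- x = a, y ∈ J'
            intro hmem
            have hyS' := hJ'S hy
            have : y ∈ T := by
              rw [hT]
              refine Finset.mem_insert_of_mem ?_
              refine Finset.mem_image.2 ⟨y - a, hmem, ?_⟩
              omega
            exact (Finset.mem_sdiff.1 hyS').2 this
        · rcases Finset.mem_insert.1 hy with rfl | hy
          · exact absurd hxy (not_lt_of_gt (haJ' x hx))
          · exact hgood x hx y hy hxy

/-- Greedy disjointness lemma: with `I` a fixed set of `ℓ` access
positions in `[1, m+d]` and `B j = {b ∈ [1,m] : j + b ∈ I}`, there is a set
`J ⊆ {0,…,d}` of at least `⌈d/ℓ²⌉` shifts whose sets `B j` are pairwise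
disjoint. -/
theorem stmt_8 (m d ℓ : ℕ) (hd : 1 ≤ d) (hl : 1 ≤ ℓ)
    (I : Finset ℕ) (hI : I ⊆ Finset.Icc 1 (m + d)) (hIcard : I.card = ℓ) :
    ∃ J : Finset ℕ, J ⊆ Finset.range (d + 1) ∧
      Nat.ceil ((d : ℝ) / (ℓ : ℝ) ^ 2) ≤ J.card ∧
      (J : Set ℕ).Pairwise (fun j₁ j₂ =>
        Disjoint ((Finset.Icc 1 m).filter (fun b => j₁ + b ∈ I))
                 ((Finset.Icc 1 m).filter (fun b => j₂ + b ∈ I))) := by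
  classical
  set Dset : Finset ℕ := (I ×ˢ I).image (fun p => p.2 - p.1) with hDset
  set F : Finset ℕ := Dset.erase 0 with hF
  have hIne : I.Nonempty := Finset.card_pos.1 (by omega)
  have h0D : 0 ∈ Dset := by
    obtain ⟨i, hi⟩ := hIne
    exact Finset.mem_image.2 ⟨(i, i), Finset.mem_product.2 ⟨hi, hi⟩, by simp⟩
  have hDcard : Dset.card ≤ ℓ * ℓ := by
    calc Dset.card ≤ (I ×ˢ I).card := Finset.card_image_le
      _ = ℓ * ℓ := by rw [Finset.card_product, hIcard]
  have hFcard : F.card + 1 ≤ ℓ * ℓ := by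
    have h1 : 1 ≤ Dset.card := Finset.card_pos.2 ⟨0, h0D⟩
    rw [hF, Finset.card_erase_of_mem h0D]
    omega
  obtain ⟨J, hJsub, hJcard, hJgood⟩ := greedy_avoid F (Finset.range (d + 1))
  have hkey : ∀ j₁ ∈ J, ∀ j₂ ∈ J, j₁ < j₂ →
      Disjoint ((Finset.Icc 1 m).filter (fun b => j₁ + b ∈ I))
               ((Finset.Icc 1 m).filter (fun b => j₂ + b ∈ I)) := by
    intro j₁ h₁ j₂ h₂ hlt
    rw [Finset.disjoint_left]
    intro b hb₁ hb₂
    have hi₁ : j₁ + b ∈ I := (Finset.mem_filter.1 hb₁).2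
    have hi₂ : j₂ + b ∈ I := (Finset.mem_filter.1 hb₂).2
    have hmem : j₂ - j₁ ∈ F := by
      rw [hF, Finset.mem_erase]
      constructor
      · omega
      · exact Finset.mem_image.2 ⟨(j₁ + b, j₂ + b),
          Finset.mem_product.2 ⟨hi₁, hi₂⟩, by simp; omega⟩
    exact hJgood j₁ h₁ j₂ h₂ hlt hmem
  refine ⟨J, hJsub, ?_, ?_⟩
  · have hrange : (Finset.range (d + 1)).card = d + 1 := Finset.card_range _
    have hd1 : d + 1 ≤ J.card * (ℓ * ℓ) := by
      calc d + 1 = (Finset.range (d + 1)).card := hrange.symm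
        _ ≤ J.card * (F.card + 1) := hJcard
        _ ≤ J.card * (ℓ * ℓ) := Nat.mul_le_mul_left _ hFcard
    rw [Nat.ceil_le]
    rw [div_le_iff₀ (by positivity)]
    have : (d : ℝ) ≤ (J.card : ℝ) * ((ℓ : ℝ) * ℓ) := by
      exact_mod_cast Nat.le_trans (Nat.le_succ d) hd1
    nlinarith
  · intro j₁ h₁ j₂ h₂ hne
    rcases hne.lt_or_gt with h | h
    · exact hkey j₁ h₁ j₂ h₂ h
    · exact (hkey j₂ h₂ j₁ h₁ h).symm
end
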